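/- Let Δ be the abstractly presented group ⟨a, b, x, c₀, c₁, e | x·e·a·b·a⁻¹·b⁻¹ = 1, x³ = 1, c₀² = 1, c₁² = 1, (c₀·c₁)³ = 1, e·c₀·e⁻¹ = c₁⟩ and let D₃ = ⟨s, t | s² = t² = (s·t)³ = 1⟩ be the dihedral group of order 6. Then there exists a (unique) group homomorphism θ: Δ → D₃ with θ(a) = θ(b) = 1, θ(x) = st, θ(e) = ts, θ(c₀) = s, θ(c₁) = tst, and θ is surjective. -/
import Mathlib

inductive DeltaGen : Type
  | a : DeltaGen
  | b : DeltaGen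
  | x : DeltaGen
  | c0 : DeltaGen
  | c1 : DeltaGen
  | e : DeltaGen

def relsD : Set (FreeGroup DeltaGen) :=
  { FreeGroup.of DeltaGen.x * FreeGroup.of DeltaGen.e * FreeGroup.of DeltaGen.a *
      FreeGroup.of DeltaGen.b * (FreeGroup.of DeltaGen.a)⁻¹ * (FreeGroup.of DeltaGen.b)⁻¹,
    (FreeGroup.of DeltaGen.x) ^ 3,
    (FreeGroup.of DeltaGen.c0) ^ 2,
    (FreeGroup.of DeltaGen.c1) ^ 2,
    (FreeGroup.of DeltaGen.c0 * FreeGroup.of DeltaGen.c1) ^ 3,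
    FreeGroup.of DeltaGen.e * FreeGroup.of DeltaGen.c0 * (FreeGroup.of DeltaGen.e)⁻¹ *
      (FreeGroup.of DeltaGen.c1)⁻¹ }

abbrev Delta : Type := PresentedGroup relsD

def sD3 : DihedralGroup 3 := DihedralGroup.sr 0
def tD3 : DihedralGroup 3 := DihedralGroup.sr 1

def fGen : DeltaGen → DihedralGroup 3
  | .a => 1
  | .b => 1
  | .x => sD3 * tD3
  | .e => tD3 * sD3
  | .c0 => sD3
  | .c1 => tD3 * sD3 * tD3

lemma fGen_rels : ∀ r ∈ relsD, FreeGroup.lift fGen r = 1 := by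
  intro r hr
  rcases hr with h | h | h | h | h | h <;> subst h <;>
    simp [fGen, sD3, tD3] <;> decide

noncomputable def theta : Delta →* DihedralGroup 3 := PresentedGroup.toGroup fGen_rels

/-- There exists a unique group homomorphism `θ : Δ → D₃` with
`θ(a) = θ(b) = 1`, `θ(x) = st`, `θ(e) = ts`, `θ(c₀) = s`, `θ(c₁) = tst`, and `θ` is
surjective. -/
theorem exists_unique_theta_Delta_to_D3_and_surjective :
    (∃! θ : Delta →* DihedralGroup 3,
      θ (PresentedGroup.of DeltaGen.a) = 1 ∧ θ (PresentedGroup.of DeltaGen.b) = 1 ∧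
      θ (PresentedGroup.of DeltaGen.x) = sD3 * tD3 ∧
      θ (PresentedGroup.of DeltaGen.e) = tD3 * sD3 ∧
      θ (PresentedGroup.of DeltaGen.c0) = sD3 ∧
      θ (PresentedGroup.of DeltaGen.c1) = tD3 * sD3 * tD3) ∧
    ∀ θ : Delta →* DihedralGroup 3,
      (θ (PresentedGroup.of DeltaGen.a) = 1 ∧ θ (PresentedGroup.of DeltaGen.b) = 1 ∧
        θ (PresentedGroup.of DeltaGen.x) = sD3 * tD3 ∧
        θ (PresentedGroup.of DeltaGen.e) = tD3 * sD3 ∧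
        θ (PresentedGroup.of DeltaGen.c0) = sD3 ∧
        θ (PresentedGroup.of DeltaGen.c1) = tD3 * sD3 * tD3) →
      Function.Surjective θ := by
  constructor
  · refine ⟨theta, ⟨?_, ?_, ?_, ?_, ?_, ?_⟩, ?_⟩
    · exact PresentedGroup.toGroup.of fGen_rels
    · exact PresentedGroup.toGroup.of fGen_rels
    · exact PresentedGroup.toGroup.of fGen_rels
    · exact PresentedGroup.toGroup.of fGen_rels
    · exact PresentedGroup.toGroup.of fGen_rels
    · exact PresentedGroup.toGroup.of fGen_rels
    · rintro φ ⟨ha, hb, hx, he, hc0, hc1⟩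
      refine PresentedGroup.ext fun g => ?_
      cases g <;>
        simp [ha, hb, hx, he, hc0, hc1, theta, PresentedGroup.toGroup.of, fGen]
  · rintro θ ⟨ha, hb, hx, he, hc0, hc1⟩
    intro d
    rcases d with i | i <;> fin_cases i
    · exact ⟨1, by rw [map_one]; decide⟩
    · exact ⟨PresentedGroup.of DeltaGen.x, by rw [hx]; decide⟩
    · exact ⟨PresentedGroup.of DeltaGen.e, by rw [he]; decide⟩
    · exact ⟨PresentedGroup.of DeltaGen.c0, by rw [hc0]; decide⟩
    · exact ⟨PresentedGroup.of DeltaGen.e * PresentedGroup.of DeltaGen.c0,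
        by rw [map_mul, he, hc0]; decide⟩
    · exact ⟨PresentedGroup.of DeltaGen.c1, by rw [hc1]; decide⟩
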